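/- Let μ ∈ ℂ with μ⁵ ≠ 1 and μ ≠ 0. If x ∈ ℂ⁵ is nonzero and all partial derivatives of F(x) = x₀⁵+x₁⁵+x₂⁵+x₃⁵+x₄⁵ − 5μ x₀x₁x₂x₃x₄ vanish at x, and F(x) = 0, then a contradiction follows; i.e., the quintic X_μ is smooth (its affine cone has no singular point besides the origin). -/
import Mathlib


theorem quintic_smooth_for_general_mu (μ : ℂ) (hμ5 : μ ^ 5 ≠ 1) (hμ0 : μ ≠ 0)
    (x₀ x₁ x₂ x₃ x₄ : ℂ)
    (hx : ¬ (x₀ = 0 ∧ x₁ = 0 ∧ x₂ = 0 ∧ x₃ = 0 ∧ x₄ = 0))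
    (hF : x₀ ^ 5 + x₁ ^ 5 + x₂ ^ 5 + x₃ ^ 5 + x₄ ^ 5 - 5 * μ * (x₀ * x₁ * x₂ * x₃ * x₄) = 0)
    (hd₀ : 5 * x₀ ^ 4 - 5 * μ * (x₁ * x₂ * x₃ * x₄) = 0)
    (hd₁ : 5 * x₁ ^ 4 - 5 * μ * (x₀ * x₂ * x₃ * x₄) = 0)
    (hd₂ : 5 * x₂ ^ 4 - 5 * μ * (x₀ * x₁ * x₃ * x₄) = 0)
    (hd₃ : 5 * x₃ ^ 4 - 5 * μ * (x₀ * x₁ * x₂ * x₄) = 0)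
    (hd₄ : 5 * x₄ ^ 4 - 5 * μ * (x₀ * x₁ * x₂ * x₃) = 0) :
    False := by
  have key : ∀ q b : ℂ, 5 * b ^ 4 - 5 * μ * q = 0 → q = 0 → b = 0 := by
    intro q b h hq
    have hb4 : b ^ 4 = 0 := by rw [hq] at h; linear_combination h / 5
    exact pow_eq_zero_iff (by norm_num) |>.mp hb4
  have h0 : x₀ ≠ 0 := by
    intro h
    exact hx ⟨h, key _ _ hd₁ (by rw [h]; ring), key _ _ hd₂ (by rw [h]; ring),
      key _ _ hd₃ (by rw [h]; ring), key _ _ hd₄ (by rw [h]; ring)⟩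
  have h1 : x₁ ≠ 0 := by
    intro h
    exact hx ⟨key _ _ hd₀ (by rw [h]; ring), h, key _ _ hd₂ (by rw [h]; ring),
      key _ _ hd₃ (by rw [h]; ring), key _ _ hd₄ (by rw [h]; ring)⟩
  have h2 : x₂ ≠ 0 := by
    intro h
    exact hx ⟨key _ _ hd₀ (by rw [h]; ring), key _ _ hd₁ (by rw [h]; ring), h,
      key _ _ hd₃ (by rw [h]; ring), key _ _ hd₄ (by rw [h]; ring)⟩
  have h3 : x₃ ≠ 0 := by
    intro h
    exact hx ⟨key _ _ hd₀ (by rw [h]; ring), key _ _ hd₁ (by rw [h]; ring),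
      key _ _ hd₂ (by rw [h]; ring), h, key _ _ hd₄ (by rw [h]; ring)⟩
  have h4 : x₄ ≠ 0 := by
    intro h
    exact hx ⟨key _ _ hd₀ (by rw [h]; ring), key _ _ hd₁ (by rw [h]; ring),
      key _ _ hd₂ (by rw [h]; ring), key _ _ hd₃ (by rw [h]; ring), h⟩
  set p : ℂ := x₀ * x₁ * x₂ * x₃ * x₄ with hp_def
  have hp : p ≠ 0 :=
    mul_ne_zero (mul_ne_zero (mul_ne_zero (mul_ne_zero h0 h1) h2) h3) h4
  have e0 : x₀ ^ 5 = μ * p := by rw [hp_def]; linear_combination x₀ / 5 * hd₀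
  have e1 : x₁ ^ 5 = μ * p := by rw [hp_def]; linear_combination x₁ / 5 * hd₁
  have e2 : x₂ ^ 5 = μ * p := by rw [hp_def]; linear_combination x₂ / 5 * hd₂
  have e3 : x₃ ^ 5 = μ * p := by rw [hp_def]; linear_combination x₃ / 5 * hd₃
  have e4 : x₄ ^ 5 = μ * p := by rw [hp_def]; linear_combination x₄ / 5 * hd₄
  have hprod : p ^ 5 = μ ^ 5 * p ^ 5 := by
    calc p ^ 5 = x₀ ^ 5 * x₁ ^ 5 * x₂ ^ 5 * x₃ ^ 5 * x₄ ^ 5 := by rw [hp_def]; ring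
    _ = μ ^ 5 * p ^ 5 := by rw [e0, e1, e2, e3, e4]; ring
  have : (μ ^ 5 - 1) * p ^ 5 = 0 := by linear_combination -hprod
  rcases mul_eq_zero.mp this with h | h
  · exact hμ5 (sub_eq_zero.mp h)
  · exact pow_ne_zero 5 hp h
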